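/- arXiv:1901.09456 — 2 statements merged into one kernel-verified Lean document; each statement's English description precedes it below -/
import Mathlib

section
/- Let n ≥ 2, let 1 ≤ k < n, let M be an n×n real symmetric positive-definite matrix, and let κ̂ > 1 satisfy κ(M) ≤ κ̂. Then for every real r ≥ 0, the probability (under the uniform distribution on k-element index subsets) that |Y_k(M) − E[Y_k(M)]| ≥ r is at most 3·exp(−(r/log κ̂)·√(n/(k(n−k)))). -/
/-!
Call `f : Finset α → ℝ` exchange-bounded by `c` at level `k` if replacing one element of a
`k`-subset by another changes `f` by at most `c`. A uniformly random `(k + 1)`-subset is a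
uniformly random element `x` together with a uniformly random `k`-subset of the other elements;
the mean `g x` of `f` given `x` is again exchange-bounded by `c` as a function of `x` (couple the
two conditionings through the transposition of the two elements), so Hoeffding's lemma for `g` and
induction on `k` bound the moment generating function of `f - E f` by `exp (λ² k c² / 8)`.
Passing to complements replaces `k` by `m = min k (n - k)`. The Chernoff bound with
`λ = √(n / (k (n - k))) / log κ̂` and `m n / (k (n - k)) ≤ 2` leaves the exponent
`1 / 4 - (r / log κ̂) √(n / (k (n - k)))`, and `2 e^{1/4} ≤ 3`.

For `Y = log det M_I` the constant is `c = log κ(M)`: if `a, b ∉ v` then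
`λₙ det M_v ≤ det M_{v ∪ {a}} ≤ λ₁ det M_v`, because `det M_v / det M_{v ∪ {a}}` is the diagonal
entry of `(M_{v ∪ {a}})⁻¹` at `a`, which lies between `1 / λ₁` and `1 / λₙ`.
-/

open Matrix Real Finset

/-- The log-determinant of the principal submatrix of `M` indexed by `s`. -/
noncomputable def logMinor {n : ℕ} (M : Matrix (Fin n) (Fin n) ℝ) (s : Finset (Fin n)) : ℝ :=
  Real.log (M.submatrix (fun i : {x // x ∈ s} => (i : Fin n))
    (fun i : {x // x ∈ s} => (i : Fin n))).det

/-- The mean of `Y_k(M)`, the log-minor of a uniformly random `k`-element index set. -/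
noncomputable def meanLM {n : ℕ} (k : ℕ) (M : Matrix (Fin n) (Fin n) ℝ) : ℝ :=
  (∑ s ∈ Finset.powersetCard k (Finset.univ : Finset (Fin n)), logMinor M s) / (n.choose k)

/-- The variance of `Y_k(M)` under the uniform distribution on `k`-element index sets. -/
noncomputable def varLM {n : ℕ} (k : ℕ) (M : Matrix (Fin n) (Fin n) ℝ) : ℝ :=
  (∑ s ∈ Finset.powersetCard k (Finset.univ : Finset (Fin n)),
    (logMinor M s - meanLM k M) ^ 2) / (n.choose k)

open Classical in
/-- `P(|Y_k(M) - E[Y_k(M)]| ≥ r)` under the uniform distribution on `k`-element index sets. -/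
noncomputable def probDevLM {n : ℕ} (k : ℕ) (M : Matrix (Fin n) (Fin n) ℝ) (r : ℝ) : ℝ :=
  (((Finset.powersetCard k (Finset.univ : Finset (Fin n))).filter
      (fun s => r ≤ |logMinor M s - meanLM k M|)).card : ℝ) / (n.choose k)

/-- The largest eigenvalue `λ₁(M)` of a Hermitian matrix. -/
noncomputable def maxEig {n : ℕ} {M : Matrix (Fin n) (Fin n) ℝ} (hM : M.IsHermitian) : ℝ :=
  ⨆ i, hM.eigenvalues i

/-- The smallest eigenvalue `λₙ(M)` of a Hermitian matrix. -/
noncomputable def minEig {n : ℕ} {M : Matrix (Fin n) (Fin n) ℝ} (hM : M.IsHermitian) : ℝ :=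
  ⨅ i, hM.eigenvalues i

/-- The condition number `κ(M) = λ₁(M) / λₙ(M)` of a Hermitian matrix. -/
noncomputable def condNum {n : ℕ} {M : Matrix (Fin n) (Fin n) ℝ} (hM : M.IsHermitian) : ℝ :=
  maxEig hM / minEig hM

open scoped MatrixOrder

open ProbabilityTheory MeasureTheory in
theorem Fintype.sum_exp_mul_sub_mean_le {ι : Type*} [Fintype ι] [Nonempty ι] (g : ι → ℝ)
    {c : ℝ} (hg : ∀ i j, g i - g j ≤ c) (t : ℝ) :
    ∑ i, exp (t * (g i - (∑ j, g j) / Fintype.card ι)) ≤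
      Fintype.card ι * exp (t ^ 2 * c ^ 2 / 8) := by
  let _ : MeasurableSpace ι := ⊤
  let μ := (PMF.uniformOfFintype ι).toMeasure
  have hμ (h : ι → ℝ) : ∫ i, h i ∂μ = (∑ i, h i) / Fintype.card ι := by
    simp [μ, PMF.integral_eq_sum, div_eq_inv_mul, Finset.mul_sum]
  obtain ⟨i₀, hi₀⟩ := Finite.exists_min g
  obtain ⟨i₁, hi₁⟩ := Finite.exists_max g
  have hmgf := (hasSubgaussianMGF_of_mem_Icc (μ := μ) Measurable.of_discrete.aemeasurable
    (ae_of_all _ fun i => ⟨hi₀ i, hi₁ i⟩)).mgf_le t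
  have hcard : (0 : ℝ) < Fintype.card ι := by exact_mod_cast Fintype.card_pos
  rw [mgf, hμ, hμ, div_le_iff₀ hcard, mul_comm] at hmgf
  refine hmgf.trans (mul_le_mul_of_nonneg_left (exp_le_exp.2 ?_) hcard.le)
  have h₀₁ : 0 ≤ g i₁ - g i₀ := sub_nonneg.2 (hi₁ i₀)
  have hsq : (g i₁ - g i₀) ^ 2 ≤ c ^ 2 := pow_le_pow_left₀ h₀₁ (hg i₁ i₀) 2
  push_cast [coe_nnnorm, Real.norm_eq_abs, abs_of_nonneg h₀₁]
  nlinarith [mul_le_mul_of_nonneg_right hsq (sq_nonneg t)]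

theorem Finset.sum_exp_mul_sub_mean_le {ι : Type*} {s : Finset ι} (hs : s.Nonempty) (g : ι → ℝ)
    {c : ℝ} (hg : ∀ x ∈ s, ∀ y ∈ s, g x - g y ≤ c) (t : ℝ) :
    ∑ x ∈ s, exp (t * (g x - (∑ y ∈ s, g y) / s.card)) ≤ s.card * exp (t ^ 2 * c ^ 2 / 8) := by
  have := hs.to_subtype
  have h := Fintype.sum_exp_mul_sub_mean_le (fun x : s => g x) (fun x y => hg x x.2 y y.2) t
  rwa [sum_coe_sort s g, Fintype.card_coe,
    sum_coe_sort s (fun x => exp (t * (g x - (∑ y ∈ s, g y) / s.card)))] at h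

section SubsetCombinatorics

variable {α : Type*} [DecidableEq α]

theorem Finset.map_swap_erase {s : Finset α} {x y : α} (hx : x ∈ s) (hy : y ∈ s) :
    (s.erase x).map (Equiv.swap x y).toEmbedding = s.erase y := by
  rw [map_erase, Equiv.toEmbedding_apply, Equiv.swap_apply_left, map_perm]
  intro a ha
  rcases (Equiv.swap_apply_ne_self_iff.1 ha).2 with rfl | rfl <;> assumption

theorem Finset.map_swap_of_mem {t : Finset α} {x y : α} (hx : x ∈ t) (hy : y ∈ t) :
    t.map (Equiv.swap x y).toEmbedding = t :=
  map_perm fun a ha => by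
    rcases (Equiv.swap_apply_ne_self_iff.1 ha).2 with rfl | rfl <;> assumption

theorem Finset.map_swap_of_notMem {t : Finset α} {x y : α} (hx : x ∉ t) (hy : y ∉ t) :
    t.map (Equiv.swap x y).toEmbedding = t := by
  ext z
  rw [mem_map_equiv, Equiv.symm_swap]
  by_cases hzx : z = x
  · subst hzx; simp [hx, hy]
  by_cases hzy : z = y
  · subst hzy; simp [hx, hy]
  rw [Equiv.swap_apply_of_ne_of_ne hzx hzy]

theorem Finset.sum_sum_powersetCard_erase_insert {β : Type*} [AddCommMonoid β] (s : Finset α)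
    (k : ℕ) (F : Finset α → β) :
    ∑ x ∈ s, ∑ t ∈ (s.erase x).powersetCard k, F (insert x t) =
      (k + 1) • ∑ u ∈ s.powersetCard (k + 1), F u := by
  have hfiber (x : α) (hx : x ∈ s) : ∑ t ∈ (s.erase x).powersetCard k, F (insert x t) =
      ∑ u ∈ (s.powersetCard (k + 1)).filter (x ∈ ·), F u := by
    refine sum_nbij' (insert x) (·.erase x) (fun t ht => ?_) (fun u hu => ?_) (fun t ht => ?_)
      (fun u hu => ?_) (fun _ _ => rfl) <;> simp only [mem_filter, mem_powersetCard] at *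
    · have hxt : x ∉ t := fun h => by simpa using ht.1 h
      exact ⟨⟨insert_subset hx (ht.1.trans (erase_subset x s)), by
        rw [card_insert_of_notMem hxt, ht.2]⟩, mem_insert_self x t⟩
    · exact ⟨erase_subset_erase x hu.1.1, by rw [card_erase_of_mem hu.2, hu.1.2]; rfl⟩
    · exact erase_insert fun h => by simpa using ht.1 h
    · exact insert_erase hu.2
  rw [sum_congr rfl hfiber, smul_sum, sum_comm' (t' := s.powersetCard (k + 1)) (s' := id)]
  · refine sum_congr rfl fun u hu => ?_
    rw [id, sum_const, (mem_powersetCard.1 hu).2]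
  · intro x u
    simp only [mem_filter, mem_powersetCard, id]
    exact ⟨fun ⟨_, h, hxu⟩ => ⟨hxu, h⟩, fun ⟨hxu, h⟩ => ⟨h.1 hxu, h, hxu⟩⟩

end SubsetCombinatorics

theorem Nat.cast_mul_choose_sub_one {m : ℕ} (hm : 0 < m) (k : ℕ) :
    (m : ℝ) * (m - 1).choose k = (k + 1) * m.choose (k + 1) := by
  obtain ⟨m, rfl⟩ : ∃ j, m = j + 1 := ⟨m - 1, by omega⟩
  rw [Nat.add_sub_cancel, mul_comm (k + 1 : ℝ)]
  exact_mod_cast Nat.add_one_mul_choose_eq m k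

section Subsets

variable {α : Type*}

noncomputable def subsetMean (s : Finset α) (k : ℕ) (f : Finset α → ℝ) : ℝ :=
  (∑ t ∈ s.powersetCard k, f t) / s.card.choose k

theorem subsetMean_neg (s : Finset α) (k : ℕ) (f : Finset α → ℝ) :
    subsetMean s k (fun t => -f t) = -subsetMean s k f := by
  simp [subsetMean, sum_neg_distrib, neg_div]

variable [DecidableEq α]

theorem subsetMean_succ {s : Finset α} {k : ℕ} (hk : k < s.card) (f : Finset α → ℝ) :
    subsetMean s (k + 1) f =
      (∑ x ∈ s, subsetMean (s.erase x) k (fun t => f (insert x t))) / s.card := by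
  have herase : ∀ x ∈ s, subsetMean (s.erase x) k (fun t => f (insert x t)) =
      (∑ t ∈ (s.erase x).powersetCard k, f (insert x t)) / (s.card - 1).choose k := by
    intro x hx
    rw [subsetMean, card_erase_of_mem hx]
  have hC₀ : ((s.card - 1).choose k : ℝ) ≠ 0 := by
    exact_mod_cast (Nat.choose_pos (by omega)).ne'
  have hk1 : (k : ℝ) + 1 ≠ 0 := by positivity
  rw [sum_congr rfl herase, ← sum_div, sum_sum_powersetCard_erase_insert, subsetMean,
    nsmul_eq_mul, div_div, mul_comm _ (s.card : ℝ), Nat.cast_mul_choose_sub_one (by omega)]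
  push_cast
  field_simp

def ExchangeBounded (s : Finset α) (k : ℕ) (c : ℝ) (f : Finset α → ℝ) : Prop :=
  ∀ v ⊆ s, v.card + 1 = k → ∀ a ∈ s, ∀ b ∈ s, a ∉ v → b ∉ v →
    f (insert a v) - f (insert b v) ≤ c

namespace ExchangeBounded

variable {s : Finset α} {k : ℕ} {c : ℝ} {f : Finset α → ℝ}

theorem mono (hf : ExchangeBounded s k c f) {c' : ℝ} (hc : c ≤ c') :
    ExchangeBounded s k c' f :=
  fun v hv hcard a ha b hb hav hbv => (hf v hv hcard a ha b hb hav hbv).trans hc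

theorem neg (hf : ExchangeBounded s k c f) : ExchangeBounded s k c (fun t => -f t) :=
  fun v hv hcard a ha b hb hav hbv => by
    have := hf v hv hcard b hb a ha hbv hav
    dsimp only
    linarith

theorem comp_insert (hf : ExchangeBounded s (k + 1) c f) {x : α} (hx : x ∈ s) :
    ExchangeBounded (s.erase x) k c (fun t => f (insert x t)) := by
  intro v hv hcard a ha b hb hav hbv
  have hxv : x ∉ v := fun h => by simpa using hv h
  dsimp only
  rw [Finset.insert_comm x a, Finset.insert_comm x b]
  exact hf (insert x v) (insert_subset hx (hv.trans (erase_subset x s)))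
    (by rw [card_insert_of_notMem hxv, hcard]) a (mem_of_mem_erase ha) b (mem_of_mem_erase hb)
    (by simp [hav, ne_of_mem_erase ha]) (by simp [hbv, ne_of_mem_erase hb])

theorem sum_insert_sub_sum_insert_le (hf : ExchangeBounded s (k + 1) c f) (hc : 0 ≤ c)
    {x y : α} (hx : x ∈ s) (hy : y ∈ s) :
    ∑ t ∈ (s.erase x).powersetCard k, f (insert x t) -
        ∑ t ∈ (s.erase y).powersetCard k, f (insert y t) ≤
      ((s.erase x).powersetCard k).card • c := by
  -- couple `t` with its image under the transposition `σ` of `x` and `y`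
  set σ := (Equiv.swap x y).toEmbedding
  have hswap : ∑ t ∈ (s.erase x).powersetCard k, f (insert y (t.map σ)) =
      ∑ t ∈ (s.erase y).powersetCard k, f (insert y t) := by
    have hyx : (s.erase y).map σ = s.erase x := by
      simp only [σ, Equiv.swap_comm x y]; exact map_swap_erase hy hx
    refine sum_nbij' (·.map σ) (·.map σ) (fun t ht => ?_) (fun t ht => ?_)
      (fun t _ => by ext; simp [σ]) (fun t _ => by ext; simp [σ]) (fun _ _ => rfl) <;>
      simp only [mem_powersetCard, card_map] at ht ⊢
    · exact ⟨map_swap_erase hx hy ▸ map_subset_map.2 ht.1, ht.2⟩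
    · exact ⟨hyx ▸ map_subset_map.2 ht.1, ht.2⟩
  rw [← hswap, ← sum_sub_distrib]
  refine sum_le_card_nsmul _ _ _ fun t ht => ?_
  rw [mem_powersetCard] at ht
  have hxt : x ∉ t := fun h => by simpa using ht.1 h
  have hmap : insert y (t.map σ) = (insert x t).map σ := by
    rw [map_insert]; simp [σ]
  by_cases hyt : y ∈ t
  · rw [hmap, map_swap_of_mem (mem_insert_self x t) (mem_insert_of_mem hyt), sub_self]
    exact hc
  · rw [map_swap_of_notMem hxt hyt]
    exact hf t (ht.1.trans (erase_subset x s)) (by rw [ht.2]) x hx y hy hxt hyt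

theorem subsetMean_sub_le (hf : ExchangeBounded s (k + 1) c f) (hc : 0 ≤ c) {x y : α}
    (hx : x ∈ s) (hy : y ∈ s) :
    subsetMean (s.erase x) k (fun t => f (insert x t)) -
      subsetMean (s.erase y) k (fun t => f (insert y t)) ≤ c := by
  have hsum := hf.sum_insert_sub_sum_insert_le hc hx hy
  rw [card_powersetCard, card_erase_of_mem hx, nsmul_eq_mul, mul_comm] at hsum
  rw [subsetMean, subsetMean, card_erase_of_mem hx, card_erase_of_mem hy, ← sub_div]
  exact div_le_of_le_mul₀ (by positivity) hc hsum

theorem sum_exp_mul_sub_subsetMean_le (hc : 0 ≤ c) (l : ℝ) (hf : ExchangeBounded s k c f) :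
    ∑ t ∈ s.powersetCard k, exp (l * (f t - subsetMean s k f)) ≤
      s.card.choose k * exp (l ^ 2 * k * c ^ 2 / 8) := by
  induction k generalizing s f with
  | zero => simp [subsetMean]
  | succ k ih =>
    rcases le_or_gt s.card k with hk | hk
    · simp [powersetCard_eq_empty.2 (Nat.lt_succ_of_le hk),
        Nat.choose_eq_zero_of_lt (Nat.lt_succ_of_le hk)]
    set A := subsetMean s (k + 1) f
    set g := fun x => subsetMean (s.erase x) k (fun t => f (insert x t))
    set E := (s.card - 1).choose k * exp (l ^ 2 * k * c ^ 2 / 8)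
    have hfiber : ∀ x ∈ s, ∑ t ∈ (s.erase x).powersetCard k, exp (l * (f (insert x t) - A)) ≤
        E * exp (l * (g x - A)) := by
      intro x hx
      have hx' := ih (hf.comp_insert hx)
      rw [card_erase_of_mem hx] at hx'
      calc ∑ t ∈ (s.erase x).powersetCard k, exp (l * (f (insert x t) - A))
          = (∑ t ∈ (s.erase x).powersetCard k, exp (l * (f (insert x t) - g x))) *
              exp (l * (g x - A)) := by
            rw [sum_mul]; refine sum_congr rfl fun t _ => ?_; rw [← exp_add]; ring_nf
        _ ≤ E * exp (l * (g x - A)) := mul_le_mul_of_nonneg_right hx' (exp_pos _).le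
    have hmean : ∑ x ∈ s, exp (l * (g x - A)) ≤ s.card * exp (l ^ 2 * c ^ 2 / 8) := by
      rw [show A = (∑ x ∈ s, g x) / s.card from subsetMean_succ hk f]
      exact sum_exp_mul_sub_mean_le (card_pos.1 (by omega)) g
        (fun x hx y hy => hf.subsetMean_sub_le hc hx hy) l
    refine le_of_mul_le_mul_left ?_ (by positivity : (0 : ℝ) < k + 1)
    calc ((k : ℝ) + 1) * ∑ u ∈ s.powersetCard (k + 1), exp (l * (f u - A))
        = ∑ x ∈ s, ∑ t ∈ (s.erase x).powersetCard k, exp (l * (f (insert x t) - A)) := by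
          have h := sum_sum_powersetCard_erase_insert s k (fun u => exp (l * (f u - A)))
          rw [h, nsmul_eq_mul]; push_cast; ring
      _ ≤ ∑ x ∈ s, E * exp (l * (g x - A)) := sum_le_sum hfiber
      _ ≤ E * (s.card * exp (l ^ 2 * c ^ 2 / 8)) := by
          rw [← mul_sum]; exact mul_le_mul_of_nonneg_left hmean (by positivity)
      _ = (k + 1) * (s.card.choose (k + 1) * exp (l ^ 2 * (k + 1 : ℕ) * c ^ 2 / 8)) := by
          rw [← mul_assoc, mul_comm E, ← mul_assoc, Nat.cast_mul_choose_sub_one (by omega)]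
          simp only [mul_assoc, ← exp_add]
          push_cast; ring_nf

theorem card_le_sub_subsetMean_le (hf : ExchangeBounded s k c f) (hc : 0 ≤ c) {l : ℝ}
    (hl : 0 ≤ l) (r : ℝ) :
    (#{t ∈ s.powersetCard k | r ≤ f t - subsetMean s k f} : ℝ) ≤
      s.card.choose k * exp (l ^ 2 * k * c ^ 2 / 8 - l * r) := by
  set A := subsetMean s k f
  have hmarkov : #{t ∈ s.powersetCard k | r ≤ f t - A} * exp (l * r) ≤
      ∑ t ∈ s.powersetCard k, exp (l * (f t - A)) := by
    rw [← nsmul_eq_mul]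
    refine (card_nsmul_le_sum _ _ _ fun t ht => ?_).trans
      (sum_le_sum_of_subset_of_nonneg (filter_subset _ _) fun _ _ _ => (exp_pos _).le)
    exact exp_le_exp.2 (mul_le_mul_of_nonneg_left (mem_filter.1 ht).2 hl)
  rw [exp_sub, mul_div_assoc', le_div_iff₀ (exp_pos _)]
  exact hmarkov.trans (sum_exp_mul_sub_subsetMean_le hc l hf)

theorem card_le_abs_sub_subsetMean_le (hf : ExchangeBounded s k c f) (hc : 0 ≤ c) {l : ℝ}
    (hl : 0 ≤ l) (r : ℝ) :
    (#{t ∈ s.powersetCard k | r ≤ |f t - subsetMean s k f|} : ℝ) ≤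
      2 * s.card.choose k * exp (l ^ 2 * k * c ^ 2 / 8 - l * r) := by
  have hupper := hf.card_le_sub_subsetMean_le hc hl r
  have hlower := hf.neg.card_le_sub_subsetMean_le hc hl r
  rw [subsetMean_neg] at hlower
  have hsplit : {t ∈ s.powersetCard k | r ≤ |f t - subsetMean s k f|} =
      {t ∈ s.powersetCard k | r ≤ f t - subsetMean s k f} ∪
        {t ∈ s.powersetCard k | r ≤ -f t - -subsetMean s k f} := by
    rw [← filter_or]
    refine filter_congr fun t _ => ?_
    rw [le_abs, neg_sub_neg, neg_sub]
  rw [hsplit]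
  refine (Nat.cast_le.2 (card_union_le _ _)).trans ?_
  push_cast
  linarith

end ExchangeBounded

section Compl

variable [Fintype α]

theorem sum_powersetCard_compl {β : Type*} [AddCommMonoid β] {k : ℕ}
    (hk : k ≤ Fintype.card α) (F : Finset α → β) :
    ∑ t ∈ (univ : Finset α).powersetCard k, F t =
      ∑ u ∈ (univ : Finset α).powersetCard (Fintype.card α - k), F uᶜ := by
  refine sum_nbij' (·ᶜ) (·ᶜ) (fun t ht => ?_) (fun u hu => ?_) (fun t _ => compl_compl t)
    (fun u _ => compl_compl u) (fun t _ => by rw [compl_compl]) <;>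
    simp only [mem_powersetCard, subset_univ, true_and, card_compl] at * <;> omega

theorem subsetMean_compl {k : ℕ} (hk : k ≤ Fintype.card α) (f : Finset α → ℝ) :
    subsetMean univ (Fintype.card α - k) (fun u => f uᶜ) = subsetMean univ k f := by
  rw [subsetMean, subsetMean, ← sum_powersetCard_compl hk, card_univ, Nat.choose_symm hk]

theorem card_filter_powersetCard_compl {k : ℕ} (hk : k ≤ Fintype.card α)
    (p : Finset α → Prop) [DecidablePred p] :
    #{t ∈ (univ : Finset α).powersetCard k | p t} =
      #{u ∈ (univ : Finset α).powersetCard (Fintype.card α - k) | p uᶜ} := by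
  rw [card_filter, card_filter, sum_powersetCard_compl hk]

namespace ExchangeBounded

variable {k : ℕ} {c : ℝ} {f : Finset α → ℝ}

theorem compl (hf : ExchangeBounded univ k c f) (hc : 0 ≤ c) :
    ExchangeBounded univ (Fintype.card α - k) c (fun u => f uᶜ) := by
  intro v _ hcard a _ b _ hav hbv
  rcases eq_or_ne a b with rfl | hab
  · rw [sub_self]; exact hc
  have hb : b ∈ vᶜ.erase a := mem_erase.2 ⟨hab.symm, mem_compl.2 hbv⟩
  have ha : a ∈ vᶜ.erase b := mem_erase.2 ⟨hab, mem_compl.2 hav⟩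
  set w := (vᶜ.erase a).erase b
  have hbw : (insert a v)ᶜ = insert b w := by rw [compl_insert, insert_erase hb]
  have haw : (insert b v)ᶜ = insert a w := by
    rw [compl_insert, show w = (vᶜ.erase b).erase a from erase_right_comm, insert_erase ha]
  have hwcard : w.card + 1 = k := by
    have := card_compl v
    have := card_pos.2 ⟨b, hb⟩
    rw [card_erase_of_mem hb, card_erase_of_mem (mem_compl.2 hav)] at *
    omega
  dsimp only
  rw [hbw, haw]
  exact hf w (subset_univ w) hwcard b (mem_univ b) a (mem_univ a) (by simp [w])
    (by simp [w, hab])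

theorem card_le_abs_sub_subsetMean_le_min (hf : ExchangeBounded univ k c f) (hc : 0 ≤ c)
    (hk : k ≤ Fintype.card α) {l : ℝ} (hl : 0 ≤ l) (r : ℝ) :
    (#{t ∈ (univ : Finset α).powersetCard k | r ≤ |f t - subsetMean univ k f|} : ℝ) ≤
      2 * (Fintype.card α).choose k *
        exp (l ^ 2 * (min k (Fintype.card α - k) : ℕ) * c ^ 2 / 8 - l * r) := by
  rcases le_total k (Fintype.card α - k) with h | h
  · rw [min_eq_left h, ← card_univ]
    exact hf.card_le_abs_sub_subsetMean_le hc hl r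
  · rw [min_eq_right h, card_filter_powersetCard_compl hk, ← subsetMean_compl hk f,
      ← Nat.choose_symm hk, ← card_univ]
    exact (hf.compl hc).card_le_abs_sub_subsetMean_le hc hl r

end ExchangeBounded

end Compl

end Subsets

namespace Matrix

variable {ι κ : Type*}

theorem submatrix_le_submatrix {A B : Matrix ι ι ℝ} (h : A ≤ B) (e : κ → ι) :
    A.submatrix e e ≤ B.submatrix e e :=
  le_iff.2 ((le_iff.1 h).submatrix e)

variable [Fintype ι] [DecidableEq ι]

theorem mul_dotProduct_le_dotProduct_mulVec {A : Matrix ι ι ℝ} {μ : ℝ}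
    (h : algebraMap ℝ _ μ ≤ A) (x : ι → ℝ) : μ * (x ⬝ᵥ x) ≤ x ⬝ᵥ (A *ᵥ x) := by
  have := (le_iff.1 h).dotProduct_mulVec_nonneg x
  rwa [star_trivial, sub_mulVec, dotProduct_sub, Algebra.algebraMap_eq_smul_one, smul_mulVec,
    one_mulVec, dotProduct_smul, smul_eq_mul, sub_nonneg] at this

theorem dotProduct_mulVec_le_mul_dotProduct {A : Matrix ι ι ℝ} {μ : ℝ}
    (h : A ≤ algebraMap ℝ _ μ) (x : ι → ℝ) : x ⬝ᵥ (A *ᵥ x) ≤ μ * (x ⬝ᵥ x) := by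
  have := (le_iff.1 h).dotProduct_mulVec_nonneg x
  rwa [star_trivial, sub_mulVec, dotProduct_sub, Algebra.algebraMap_eq_smul_one, smul_mulVec,
    one_mulVec, dotProduct_smul, smul_eq_mul, sub_nonneg] at this

theorem algebraMap_submatrix [Fintype κ] [DecidableEq κ] {e : κ → ι} (he : Function.Injective e)
    (c : ℝ) :
    (algebraMap ℝ (Matrix ι ι ℝ) c).submatrix e e = algebraMap ℝ (Matrix κ κ ℝ) c := by
  simp only [algebraMap_eq_diagonal, submatrix_diagonal _ e he]
  rfl

namespace PosDef

variable {A : Matrix ι ι ℝ}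

theorem mul_inv_apply_self_le_one (hA : A.PosDef) {μ : ℝ} (h : algebraMap ℝ _ μ ≤ A) (i : ι) :
    μ * A⁻¹ i i ≤ 1 := by
  set w := A⁻¹ *ᵥ Pi.single i 1
  have hwi : w i = A⁻¹ i i := by simp [w, mulVec_single]
  have hwAw : w ⬝ᵥ (A *ᵥ w) = A⁻¹ i i := by
    rw [mulVec_mulVec, mul_nonsing_inv _ (isUnit_iff_ne_zero.2 hA.det_pos.ne'), one_mulVec]
    simp [hwi]
  have hww : w i * w i ≤ w ⬝ᵥ w :=
    single_le_sum (f := fun j => w j * w j) (fun j _ => mul_self_nonneg (w j)) (mem_univ i)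
  have ht : 0 < A⁻¹ i i := hA.inv.diag_pos
  have hμ := mul_dotProduct_le_dotProduct_mulVec h w
  rw [hwAw] at hμ
  rw [hwi] at hww
  rcases le_or_gt μ 0 with hμ0 | hμ0
  · nlinarith
  · nlinarith

theorem one_le_mul_inv_apply_self (hA : A.PosDef) {μ : ℝ} (h : A ≤ algebraMap ℝ _ μ) (i : ι) :
    1 ≤ μ * A⁻¹ i i := by
  set e : ι → ℝ := Pi.single i 1
  set w := A⁻¹ *ᵥ e
  set a := A i i
  have hAw : A *ᵥ w = e := by
    rw [mulVec_mulVec, mul_nonsing_inv _ (isUnit_iff_ne_zero.2 hA.det_pos.ne'), one_mulVec]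
  have hsymm (x : ι → ℝ) : x ⬝ᵥ (A *ᵥ e) = (A *ᵥ x) i := by
    rw [dotProduct_mulVec, ← mulVec_transpose,
      (conjTranspose_eq_transpose_of_trivial A).symm.trans hA.1]
    simp [e]
  -- Cauchy–Schwarz `(eᵀ A w)² ≤ (eᵀ A e) (wᵀ A w)` for `A w = e`, as positivity at `a • w - e`
  have hquad : (a • w - e) ⬝ᵥ (A *ᵥ (a • w - e)) = a * (a * A⁻¹ i i - 1) := by
    simp only [mulVec_sub, mulVec_smul, sub_dotProduct, dotProduct_sub, smul_dotProduct,
      dotProduct_smul, hAw, hsymm, smul_eq_mul]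
    simp [e, w, a, mulVec_single]
  have hnonneg := hA.posSemidef.dotProduct_mulVec_nonneg (a • w - e)
  rw [star_trivial, hquad] at hnonneg
  have ha : 0 < a := hA.diag_pos
  have haμ : a ≤ μ := by
    simpa [e, a, mulVec_single] using dotProduct_mulVec_le_mul_dotProduct h e
  have ht : 0 < A⁻¹ i i := hA.inv.diag_pos
  have hat : 1 ≤ a * A⁻¹ i i := by nlinarith
  nlinarith [mul_le_mul_of_nonneg_right haμ ht.le]

end PosDef

theorem inv_zero_zero_eq_det_submatrix_div_det {m : ℕ} (A : Matrix (Fin (m + 1)) (Fin (m + 1)) ℝ) :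
    A⁻¹ 0 0 = (A.submatrix Fin.succ Fin.succ).det / A.det := by
  rw [inv_def, Ring.inverse_eq_inv', smul_apply, smul_eq_mul, adjugate_fin_succ_eq_det_submatrix,
    div_eq_inv_mul]
  simp

namespace PosDef

variable {m : ℕ} {A : Matrix (Fin (m + 1)) (Fin (m + 1)) ℝ}

theorem mul_det_submatrix_succ_le_det (hA : A.PosDef) {μ : ℝ} (h : algebraMap ℝ _ μ ≤ A) :
    μ * (A.submatrix Fin.succ Fin.succ).det ≤ A.det := by
  have := hA.mul_inv_apply_self_le_one h 0
  rwa [inv_zero_zero_eq_det_submatrix_div_det, mul_div_assoc',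
    div_le_one hA.det_pos] at this

theorem det_le_mul_det_submatrix_succ (hA : A.PosDef) {μ : ℝ} (h : A ≤ algebraMap ℝ _ μ) :
    A.det ≤ μ * (A.submatrix Fin.succ Fin.succ).det := by
  have := hA.one_le_mul_inv_apply_self h 0
  rwa [inv_zero_zero_eq_det_submatrix_div_det, mul_div_assoc',
    one_le_div hA.det_pos] at this

end PosDef

end Matrix

section PrincipalMinor

variable {α : Type*} [DecidableEq α]

noncomputable def principalMinor {R : Type*} [CommRing R] (M : Matrix α α R) (s : Finset α) : R :=
  (M.submatrix (fun i : s => (i : α)) (fun i : s => (i : α))).det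

theorem principalMinor_eq_det_submatrix {R : Type*} [CommRing R] (M : Matrix α α R)
    {s : Finset α} {m : ℕ} {u : Fin m → α} (hu : Function.Injective u) (hus : ∀ i, u i ∈ s)
    (hcard : s.card = m) : principalMinor M s = (M.submatrix u u).det := by
  have hbij : Function.Bijective (fun i : Fin m => (⟨u i, hus i⟩ : s)) :=
    (Fintype.bijective_iff_injective_and_card _).2
      ⟨fun i j h => hu (congrArg Subtype.val h), by simp [hcard]⟩
  rw [principalMinor, ← det_submatrix_equiv_self (Equiv.ofBijective _ hbij)]
  rfl

theorem exists_principalMinor_insert_eq {R : Type*} [CommRing R] (M : Matrix α α R)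
    {a : α} {v : Finset α} (ha : a ∉ v) :
    ∃ (m : ℕ) (u : Fin (m + 1) → α), Function.Injective u ∧
      principalMinor M (insert a v) = (M.submatrix u u).det ∧
      principalMinor M v = ((M.submatrix u u).submatrix Fin.succ Fin.succ).det := by
  set e := v.equivFin.symm
  set u : Fin (v.card + 1) → α := Fin.cons a (fun i => (e i : α))
  have hu : Function.Injective u := by
    refine Fin.cons_injective_iff.2 ⟨fun ⟨i, hi⟩ => ha (hi ▸ (e i).2), ?_⟩
    exact Subtype.val_injective.comp e.injective
  refine ⟨v.card, u, hu, principalMinor_eq_det_submatrix M hu (fun i => ?_)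
    (card_insert_of_notMem ha), ?_⟩
  · refine Fin.cases (mem_insert_self a v) (fun i => mem_insert_of_mem (e i).2) i
  · rw [submatrix_submatrix]
    exact principalMinor_eq_det_submatrix M (hu.comp (Fin.succ_injective _))
      (fun i => (e i).2) rfl

theorem Matrix.PosDef.principalMinor_pos {M : Matrix α α ℝ} (hM : M.PosDef) (s : Finset α) :
    0 < principalMinor M s :=
  (hM.submatrix Subtype.val_injective).det_pos

variable [Fintype α] {M : Matrix α α ℝ}

theorem Matrix.PosDef.mul_principalMinor_le_principalMinor_insert (hM : M.PosDef) {μ : ℝ}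
    (h : algebraMap ℝ _ μ ≤ M) {a : α} {v : Finset α} (ha : a ∉ v) :
    μ * principalMinor M v ≤ principalMinor M (insert a v) := by
  obtain ⟨m, u, hu, hins, hv⟩ := exists_principalMinor_insert_eq M ha
  rw [hins, hv]
  refine (hM.submatrix hu).mul_det_submatrix_succ_le_det ?_
  simpa [algebraMap_submatrix hu] using submatrix_le_submatrix h u

theorem Matrix.PosDef.principalMinor_insert_le_mul_principalMinor (hM : M.PosDef) {μ : ℝ}
    (h : M ≤ algebraMap ℝ _ μ) {a : α} {v : Finset α} (ha : a ∉ v) :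
    principalMinor M (insert a v) ≤ μ * principalMinor M v := by
  obtain ⟨m, u, hu, hins, hv⟩ := exists_principalMinor_insert_eq M ha
  rw [hins, hv]
  refine (hM.submatrix hu).det_le_mul_det_submatrix_succ ?_
  simpa [algebraMap_submatrix hu] using submatrix_le_submatrix h u

end PrincipalMinor

section LogMinor

variable {n : ℕ} {M : Matrix (Fin n) (Fin n) ℝ}

theorem logMinor_eq (M : Matrix (Fin n) (Fin n) ℝ) (s : Finset (Fin n)) :
    logMinor M s = log (principalMinor M s) := rfl

theorem logMinor_insert_sub_logMinor_insert_le (hM : M.PosDef) {μ₁ μ₂ : ℝ} (hμ₁ : 0 < μ₁)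
    (h₁ : algebraMap ℝ _ μ₁ ≤ M) (h₂ : M ≤ algebraMap ℝ _ μ₂) {v : Finset (Fin n)}
    {a b : Fin n} (ha : a ∉ v) (hb : b ∉ v) :
    logMinor M (insert a v) - logMinor M (insert b v) ≤ log (μ₂ / μ₁) := by
  have hv := hM.principalMinor_pos v
  have hva := hM.principalMinor_pos (insert a v)
  have hvb := hM.principalMinor_pos (insert b v)
  have hupper := hM.principalMinor_insert_le_mul_principalMinor h₂ ha
  have hlower := hM.mul_principalMinor_le_principalMinor_insert h₁ hb
  rw [logMinor_eq, logMinor_eq, ← log_div hva.ne' hvb.ne',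
    ← mul_div_mul_right μ₂ μ₁ hv.ne']
  exact log_le_log (div_pos hva hvb) (div_le_div₀ (hva.le.trans hupper) hupper
    (by positivity) hlower)

theorem algebraMap_minEig_le [NeZero n] (hM : M.IsHermitian) : algebraMap ℝ _ (minEig hM) ≤ M := by
  rw [algebraMap_le_iff_le_spectrum hM.isSelfAdjoint, hM.spectrum_real_eq_range_eigenvalues]
  rintro _ ⟨i, rfl⟩
  exact ciInf_le (Set.finite_range _).bddBelow i

theorem le_algebraMap_maxEig (hM : M.IsHermitian) : M ≤ algebraMap ℝ _ (maxEig hM) := by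
  rw [le_algebraMap_iff_spectrum_le hM.isSelfAdjoint, hM.spectrum_real_eq_range_eigenvalues]
  rintro _ ⟨i, rfl⟩
  exact le_ciSup (Set.finite_range _).bddAbove i

theorem minEig_pos [NeZero n] (hM : M.PosDef) : 0 < minEig hM.1 := by
  obtain ⟨i, hi⟩ := exists_eq_ciInf_of_finite (f := hM.1.eigenvalues)
  rw [minEig, ← hi]
  exact hM.eigenvalues_pos i

theorem one_le_condNum [NeZero n] (hM : M.PosDef) : 1 ≤ condNum hM.1 := by
  rw [condNum, one_le_div (minEig_pos hM)]
  exact (ciInf_le (Set.finite_range _).bddBelow 0).trans (le_ciSup (Set.finite_range _).bddAbove 0)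

theorem exchangeBounded_logMinor [NeZero n] (hM : M.PosDef) (k : ℕ) :
    ExchangeBounded univ k (log (condNum hM.1)) (logMinor M) :=
  fun _ _ _ _ _ _ _ ha hb => logMinor_insert_sub_logMinor_insert_le hM (minEig_pos hM)
    (algebraMap_minEig_le hM.1) (le_algebraMap_maxEig hM.1) ha hb

theorem probDevLM_eq (k : ℕ) (M : Matrix (Fin n) (Fin n) ℝ) (r : ℝ) :
    probDevLM k M r = #{t ∈ (univ : Finset (Fin n)).powersetCard k |
      r ≤ |logMinor M t - subsetMean univ k (logMinor M)|} / n.choose k := by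
  rw [probDevLM, meanLM, show (n.choose k : ℝ) = (univ : Finset (Fin n)).card.choose k by simp]
  rfl

end LogMinor

theorem min_mul_add_div_mul_le_two {a b : ℝ} (ha : 0 ≤ a) (hb : 0 ≤ b) :
    min a b * ((a + b) / (a * b)) ≤ 2 := by
  rcases ha.eq_or_lt with rfl | ha
  · simp
  rcases hb.eq_or_lt with rfl | hb
  · simp
  rw [mul_div_assoc', div_le_iff₀ (mul_pos ha hb)]
  nlinarith [min_le_left a b, min_le_right a b]

theorem div_sq_mul_sq_le (q c : ℝ) : (q / c) ^ 2 * c ^ 2 ≤ q ^ 2 := by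
  rcases eq_or_ne c 0 with rfl | hc
  · simp [sq_nonneg]
  · rw [div_pow, div_mul_cancel₀ _ (pow_ne_zero 2 hc)]

theorem two_mul_exp_sub_le (x : ℝ) : 2 * exp (1 / 4 - x) ≤ 3 * exp (-x) := by
  have h := exp_bound_div_one_sub_of_interval (x := 1 / 4) (by norm_num) (by norm_num)
  rw [sub_eq_add_neg, exp_add]
  nlinarith [exp_pos (-x)]

theorem log_minor_tail_bound_general {n k : ℕ} (hkn : k < n)
    (M : Matrix (Fin n) (Fin n) ℝ) (hM : M.PosDef) (khat : ℝ)
    (hcond : condNum hM.1 ≤ khat) :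
    ∀ r : ℝ, 0 ≤ r →
      probDevLM k M r ≤
        3 * Real.exp (-(r / Real.log khat) *
          Real.sqrt ((n : ℝ) / ((k : ℝ) * ((n : ℝ) - (k : ℝ))))) := by
  intro r _
  have : NeZero n := ⟨by omega⟩
  set q := Real.sqrt ((n : ℝ) / ((k : ℝ) * ((n : ℝ) - (k : ℝ))))
  set c := log khat
  have hlog : log (condNum hM.1) ≤ c := log_le_log (by linarith [one_le_condNum hM]) hcond
  have hc : 0 ≤ c := (log_nonneg (one_le_condNum hM)).trans hlog
  have htail := ((exchangeBounded_logMinor hM k).mono hlog).card_le_abs_sub_subsetMean_le_min hc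
    (by simpa using hkn.le) (div_nonneg (sqrt_nonneg _) hc : 0 ≤ q / c) r
  have hnk : (0 : ℝ) ≤ n - k := sub_nonneg.2 (by exact_mod_cast hkn.le)
  have hq : ((min k (n - k) : ℕ) : ℝ) * q ^ 2 ≤ 2 := by
    rw [sq_sqrt (by positivity), Nat.cast_min, Nat.cast_sub hkn.le]
    simpa using min_mul_add_div_mul_le_two (Nat.cast_nonneg k) hnk
  have hexp : (q / c) ^ 2 * (min k (n - k) : ℕ) * c ^ 2 / 8 ≤ 1 / 4 := by
    nlinarith [div_sq_mul_sq_le q c]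
  rw [probDevLM_eq, div_le_iff₀ (by exact_mod_cast Nat.choose_pos hkn.le)]
  simp only [Fintype.card_fin] at htail
  calc _ ≤ 2 * n.choose k * exp ((q / c) ^ 2 * (min k (n - k) : ℕ) * c ^ 2 / 8 - q / c * r) :=
        htail
    _ ≤ 2 * n.choose k * exp (1 / 4 - q / c * r) := by gcongr
    _ ≤ 3 * exp (-(r / c) * q) * n.choose k := by
        have := two_mul_exp_sub_le (q / c * r)
        rw [show -(r / c) * q = -(q / c * r) by ring]
        nlinarith [(Nat.cast_nonneg (n.choose k) : (0 : ℝ) ≤ _)]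

theorem log_minor_tail_bound {n k : ℕ} (hn : 2 ≤ n) (hk1 : 1 ≤ k) (hkn : k < n)
    (M : Matrix (Fin n) (Fin n) ℝ) (hM : M.PosDef) (khat : ℝ) (hkhat : 1 < khat)
    (hcond : condNum hM.1 ≤ khat) :
    ∀ r : ℝ, 0 ≤ r →
      probDevLM k M r ≤
        3 * Real.exp (-(r / Real.log khat) *
          Real.sqrt ((n : ℝ) / ((k : ℝ) * ((n : ℝ) - (k : ℝ))))) :=
  log_minor_tail_bound_general hkn M hM khat hcond
end

section
/- Let n ≥ 2, let 1 ≤ k ≤ n, let D be an n×n real diagonal matrix with all diagonal entries positive, and let κ̂ ≥ 1 satisfy κ(D) ≤ κ̂. Then Var(Y_k(D)) ≤ (k/4)·((n−k)/(n−1))·(log κ̂)². -/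
open Matrix Real Finset

/-! For diagonal `D` the log-minor `Y_k(D)` is the sum of `log λ_i` over a uniformly random
`k`-subset, i.e. a sample of size `k` drawn without replacement from the population
`x_i = log λ_i`. Its variance is the population's mean square deviation times
`k (n - k) / (n - 1)` (the finite-population correction), and by Popoviciu's inequality the
mean square deviation of values lying in an interval of length `log κ(D) ≤ log κ̂` is at most
`(log κ̂)² / 4`. -/

section SamplingWithoutReplacement

variable {ι : Type*} [Fintype ι] [DecidableEq ι]

theorem card_filter_superset_powersetCard_univ_mul_descFactorial (k : ℕ) (t : Finset ι) :
    #{s ∈ powersetCard k (univ : Finset ι) | t ⊆ s} * (Fintype.card ι).descFactorial #t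
      = (Fintype.card ι).choose k * k.descFactorial #t := by
  rcases le_or_gt #t k with htk | hkt
  · rw [card_filter_powersetCard_subset t univ k (subset_univ t) htk, card_univ,
      Nat.descFactorial_eq_factorial_mul_choose, Nat.descFactorial_eq_factorial_mul_choose,
      mul_left_comm ((Fintype.card ι).choose k), Nat.choose_mul htk]
    ring
  · have : {s ∈ powersetCard k (univ : Finset ι) | t ⊆ s} = ∅ :=
      filter_eq_empty_iff.2 fun s hs hts => by
        have := card_le_card hts
        rw [(mem_powersetCard.1 hs).2] at this
        omega
    rw [this, Nat.descFactorial_eq_zero_iff_lt.2 hkt, Finset.card_empty, zero_mul, mul_zero]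

theorem sum_sq_sum_eq_sum_sum_card_filter_pair_subset (P : Finset (Finset ι)) (g : ι → ℝ) :
    ∑ s ∈ P, (∑ i ∈ s, g i) ^ 2 = ∑ i, ∑ j, (#{s ∈ P | {i, j} ⊆ s} : ℝ) * (g i * g j) := by
  have hsq (s : Finset ι) :
      (∑ i ∈ s, g i) ^ 2 = ∑ i, ∑ j, if {i, j} ⊆ s then g i * g j else 0 := by
    simp [insert_subset_iff, ite_and, sq, Finset.sum_mul_sum]
  simp_rw [hsq]
  rw [sum_comm]
  refine sum_congr rfl fun i _ => ?_
  rw [sum_comm]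
  refine sum_congr rfl fun j _ => ?_
  rw [← sum_filter, sum_const, nsmul_eq_mul]

theorem sum_powersetCard_univ_sq_sum_of_sum_eq_zero (hι : 2 ≤ Fintype.card ι) (k : ℕ)
    {g : ι → ℝ} (hg : ∑ i, g i = 0) :
    ∑ s ∈ powersetCard k univ, (∑ i ∈ s, g i) ^ 2 =
      (Fintype.card ι).choose k *
        (k * (Fintype.card ι - k) / (Fintype.card ι * (Fintype.card ι - 1))) * ∑ i, g i ^ 2 := by
  set n := Fintype.card ι
  have hn2 : (2 : ℝ) ≤ n := by exact_mod_cast hι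
  have hn0 : (n : ℝ) ≠ 0 := by positivity
  have hn1 : (n : ℝ) - 1 ≠ 0 := by linarith
  have hn : (n : ℝ) * (n - 1) ≠ 0 := mul_ne_zero hn0 hn1
  set A : ℝ := n.choose k * k / n
  set C : ℝ := n.choose k * (k * (k - 1)) / (n * (n - 1))
  have hA (i : ι) : (#{s ∈ powersetCard k univ | {i, i} ⊆ s} : ℝ) = A := by
    have := card_filter_superset_powersetCard_univ_mul_descFactorial k {i}
    rw [card_singleton, Nat.descFactorial_one, Nat.descFactorial_one] at this
    rw [pair_eq_singleton, eq_div_iff hn0]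
    exact_mod_cast this
  have hC (i j : ι) (hij : i ≠ j) : (#{s ∈ powersetCard k univ | {i, j} ⊆ s} : ℝ) = C := by
    have := congrArg (Nat.cast (R := ℝ))
      (card_filter_superset_powersetCard_univ_mul_descFactorial k {i, j})
    rw [card_pair hij] at this
    push_cast [Nat.cast_descFactorial_two] at this
    rw [eq_div_iff hn, this]
  -- `∑ g = 0` turns the off-diagonal terms of row `i` into `-C * g i ^ 2`.
  have hrow (i : ι) :
      ∑ j, (#{s ∈ powersetCard k univ | {i, j} ⊆ s} : ℝ) * (g i * g j) = (A - C) * g i ^ 2 := by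
    rw [← add_sum_erase _ _ (mem_univ i), hA,
      sum_congr rfl fun j hj => by rw [hC i j (ne_of_mem_erase hj).symm],
      ← mul_sum, ← mul_sum, sum_erase_eq_sub (mem_univ i), hg]
    ring
  rw [sum_sq_sum_eq_sum_sum_card_filter_pair_subset, sum_congr rfl fun i _ => hrow i,
    ← mul_sum]
  congr 1
  simp only [A, C]
  field_simp
  ring

end SamplingWithoutReplacement

theorem sum_sq_sub_average_le_sum_sq_sub {α : Type*} (P : Finset α) (Y : α → ℝ) (c : ℝ) :
    ∑ s ∈ P, (Y s - (∑ t ∈ P, Y t) / #P) ^ 2 ≤ ∑ s ∈ P, (Y s - c) ^ 2 := by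
  rcases P.eq_empty_or_nonempty with rfl | hP
  · simp
  have hsum : ∑ t ∈ P, Y t = #P * ((∑ t ∈ P, Y t) / #P) := by
    rw [mul_div_cancel₀ _ (by exact_mod_cast hP.card_ne_zero)]
  generalize (∑ t ∈ P, Y t) / #P = m at hsum ⊢
  have : ∑ s ∈ P, (Y s - c) ^ 2 = ∑ s ∈ P, (Y s - m) ^ 2 + #P * (m - c) ^ 2 := by
    simp only [sub_sq, sum_add_distrib, sum_sub_distrib, ← sum_mul, ← mul_sum, hsum, sum_const,
      nsmul_eq_mul]
    ring
  rw [this]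
  have : (0 : ℝ) ≤ #P * (m - c) ^ 2 := by positivity
  linarith

theorem sum_sq_sub_average_le_of_mem_Icc {ι : Type*} [Fintype ι] {x : ι → ℝ} {a b : ℝ}
    (hx : ∀ i, x i ∈ Set.Icc a b) :
    ∑ i, (x i - (∑ j, x j) / Fintype.card ι) ^ 2 ≤ Fintype.card ι * (b - a) ^ 2 / 4 :=
  calc ∑ i, (x i - (∑ j, x j) / Fintype.card ι) ^ 2 ≤ ∑ i, (x i - (a + b) / 2) ^ 2 := by
        simpa only [card_univ] using sum_sq_sub_average_le_sum_sq_sub univ x ((a + b) / 2)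
    _ ≤ ∑ _i : ι, ((b - a) / 2) ^ 2 := by
        refine sum_le_sum fun i _ => ?_
        obtain ⟨hai, hib⟩ := hx i
        exact sq_le_sq' (by linarith) (by linarith)
    _ = Fintype.card ι * (b - a) ^ 2 / 4 := by
        rw [sum_const, card_univ, nsmul_eq_mul]
        ring

theorem logMinor_diagonal {n : ℕ} {d : Fin n → ℝ} (hd : ∀ i, 0 < d i) (s : Finset (Fin n)) :
    logMinor (diagonal d) s = ∑ i ∈ s, Real.log (d i) := by
  rw [logMinor, submatrix_diagonal d _ Subtype.val_injective, det_diagonal,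
    Function.comp_def, prod_coe_sort s d, Real.log_prod fun i _ => (hd i).ne']

theorem log_mem_Icc_log_iInf_of_iSup_div_iInf_le {ι : Type*} [Finite ι] {d : ι → ℝ}
    (hd : ∀ i, 0 < d i) {κ : ℝ} (hκ : (⨆ i, d i) / (⨅ i, d i) ≤ κ) (i : ι) :
    Real.log (d i) ∈ Set.Icc (Real.log (⨅ j, d j)) (Real.log (⨅ j, d j) + Real.log κ) := by
  have : Nonempty ι := ⟨i⟩
  obtain ⟨j, hj⟩ := exists_eq_ciInf_of_finite (f := d)
  have hinf : 0 < ⨅ j, d j := hj ▸ hd j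
  have hle : (⨅ j, d j) ≤ d i := ciInf_le (Finite.bddBelow_range d) i
  have hratio : d i / (⨅ j, d j) ≤ κ :=
    (div_le_div_of_nonneg_right (le_ciSup (Finite.bddAbove_range d) i) hinf.le).trans hκ
  refine ⟨Real.log_le_log hinf hle, ?_⟩
  rw [← sub_le_iff_le_add', ← Real.log_div (hd i).ne' hinf.ne']
  exact Real.log_le_log (div_pos (hd i) hinf) hratio

theorem log_minor_variance_bound_diagonal_general {n k : ℕ} (hn : 2 ≤ n) (hkn : k ≤ n)
    (d : Fin n → ℝ) (hd : ∀ i, 0 < d i) (khat : ℝ)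
    (hcond : (⨆ i, d i) / (⨅ i, d i) ≤ khat) :
    varLM k (Matrix.diagonal d) ≤
      ((k : ℝ) / 4) * (((n : ℝ) - (k : ℝ)) / ((n : ℝ) - 1)) * (Real.log khat) ^ 2 := by
  set x : Fin n → ℝ := fun i => Real.log (d i)
  set μ := (∑ i, x i) / n
  have hn1 : (1 : ℝ) < n := by exact_mod_cast hn
  have hcentered : ∑ i, (x i - μ) = 0 := by
    rw [sum_sub_distrib, sum_const, card_univ, Fintype.card_fin, nsmul_eq_mul,
      mul_div_cancel₀ _ (by positivity), sub_self]
  have hspread : ∑ i, (x i - μ) ^ 2 ≤ n * Real.log khat ^ 2 / 4 := by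
    simpa using
      sum_sq_sub_average_le_of_mem_Icc (log_mem_Icc_log_iInf_of_iSup_div_iInf_le hd hcond)
  have hshift (s) (hs : s ∈ powersetCard k univ) :
      logMinor (diagonal d) s - k * μ = ∑ i ∈ s, (x i - μ) := by
    rw [logMinor_diagonal hd, sum_sub_distrib, sum_const, (mem_powersetCard.1 hs).2, nsmul_eq_mul]
  have hcoeff : 0 ≤ (k : ℝ) * (n - k) / (n * (n - 1)) := by
    have : (k : ℝ) ≤ n := by exact_mod_cast hkn
    exact div_nonneg (mul_nonneg k.cast_nonneg (by linarith))
      (mul_nonneg n.cast_nonneg (by linarith))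
  calc varLM k (diagonal d)
      ≤ (∑ s ∈ powersetCard k univ, (logMinor (diagonal d) s - k * μ) ^ 2) / n.choose k := by
        rw [varLM, meanLM]
        gcongr ?_ / _
        simpa using
          sum_sq_sub_average_le_sum_sq_sub (powersetCard k univ) (logMinor (diagonal d)) (k * μ)
    _ = k * (n - k) / (n * (n - 1)) * ∑ i, (x i - μ) ^ 2 := by
        rw [sum_congr rfl fun s hs => by rw [hshift s hs],
          sum_powersetCard_univ_sq_sum_of_sum_eq_zero (by simpa) k hcentered]
        simp only [Fintype.card_fin]
        field_simp [(Nat.choose_pos hkn).ne']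
    _ ≤ k * (n - k) / (n * (n - 1)) * (n * Real.log khat ^ 2 / 4) := by gcongr
    _ = (k / 4) * ((n - k) / (n - 1)) * Real.log khat ^ 2 := by
        field_simp

theorem log_minor_variance_bound_diagonal {n k : ℕ} (hn : 2 ≤ n) (hk1 : 1 ≤ k) (hkn : k ≤ n)
    (d : Fin n → ℝ) (hd : ∀ i, 0 < d i) (khat : ℝ) (hkhat : 1 ≤ khat)
    (hcond : (⨆ i, d i) / (⨅ i, d i) ≤ khat) :
    varLM k (Matrix.diagonal d) ≤
      ((k : ℝ) / 4) * (((n : ℝ) - (k : ℝ)) / ((n : ℝ) - 1)) * (Real.log khat) ^ 2 :=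
  log_minor_variance_bound_diagonal_general hn hkn d hd khat hcond
end
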